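/- Let A be a finite alphabet, f₁ : A → A, f₂ : A × A → A, and let C ⊆ A³ be unambiguous for the Diamond Network with these functions. For x ∈ C define ω(x) = {f₂(x₂', x₃') : (x₁',x₂',x₃') ∈ A³ with dH((x₁',x₂',x₃'), x) ≤ 1}. Then there is at most one codeword x ∈ C with |ω(x)| = 1. -/

import Mathlib

/-!
If `|ω(x)| = 1`, then `f₂` takes the value `f₂(x₂, x₃)` at every pair `(x₂', x₃')` that differs
from `(x₂, x₃)` in at most one place. For two such codewords `x` and `y` this gives
`f₂(x₂, x₃) = f₂(x₂, y₃) = f₂(y₂, y₃)`, so the output `(f₁(x₁), f₂(x₂, x₃))` of `x` is also the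
output of the corruption `(x₁, y₂, y₃)` of `y`; unambiguity then forces `x = y`.
-/

open Finset

/-- Hamming distance on triples. -/
def dH3 {A : Type*} [DecidableEq A] (x y : A × A × A) : ℕ :=
  (if x.1 = y.1 then 0 else 1) + (if x.2.1 = y.2.1 then 0 else 1) +
    (if x.2.2 = y.2.2 then 0 else 1)

/-- The set of possible outputs at the terminal of the Diamond Network. -/
def Omega {A : Type*} [Fintype A] [DecidableEq A] (f₁ : A → A) (f₂ : A → A → A)
    (x : A × A × A) : Finset (A × A) :=
  (Finset.univ.filter fun x' : A × A × A => dH3 x' x ≤ 1).image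
    fun x' => (f₁ x'.1, f₂ x'.2.1 x'.2.2)

/-- An outer code is unambiguous if output sets of distinct codewords are disjoint. -/
def Unambiguous {A : Type*} [Fintype A] [DecidableEq A] (f₁ : A → A) (f₂ : A → A → A)
    (C : Finset (A × A × A)) : Prop :=
  ∀ x ∈ C, ∀ y ∈ C, x ≠ y → Disjoint (Omega f₁ f₂ x) (Omega f₁ f₂ y)

/-- The set of possible symbols on the lower edge, over corrupted triples. -/
def omegaT {A : Type*} [Fintype A] [DecidableEq A] (f₂ : A → A → A) (x : A × A × A) :
    Finset A :=
  (Finset.univ.filter fun x' : A × A × A => dH3 x' x ≤ 1).image fun x' => f₂ x'.2.1 x'.2.2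

section

variable {A : Type*} [DecidableEq A]

lemma dH3_self (x : A × A × A) : dH3 x x = 0 := by
  simp [dH3]

lemma dH3_fst_le_one (a : A) (x : A × A × A) : dH3 (a, x.2) x ≤ 1 := by
  unfold dH3; split_ifs <;> simp_all

lemma dH3_snd_le_one (b : A) (x : A × A × A) : dH3 (x.1, b, x.2.2) x ≤ 1 := by
  unfold dH3; split_ifs <;> simp_all

lemma dH3_thd_le_one (c : A) (x : A × A × A) : dH3 (x.1, x.2.1, c) x ≤ 1 := by
  unfold dH3; split_ifs <;> simp_all

variable [Fintype A]

lemma mem_omegaT_of_dH3_le_one (f₂ : A → A → A) {x x' : A × A × A} (h : dH3 x' x ≤ 1) :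
    f₂ x'.2.1 x'.2.2 ∈ omegaT f₂ x :=
  mem_image.2 ⟨x', by simp [h], rfl⟩

lemma mem_Omega_of_dH3_le_one (f₁ : A → A) (f₂ : A → A → A) {x x' : A × A × A}
    (h : dH3 x' x ≤ 1) : (f₁ x'.1, f₂ x'.2.1 x'.2.2) ∈ Omega f₁ f₂ x :=
  mem_image.2 ⟨x', by simp [h], rfl⟩

lemma apply_eq_of_omegaT_card_eq_one {f₂ : A → A → A} {x : A × A × A}
    (hx : (omegaT f₂ x).card = 1) {x' : A × A × A} (h : dH3 x' x ≤ 1) :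
    f₂ x'.2.1 x'.2.2 = f₂ x.2.1 x.2.2 :=
  card_le_one.1 hx.le _ (mem_omegaT_of_dH3_le_one f₂ h) _
    (mem_omegaT_of_dH3_le_one f₂ (by simp [dH3_self]))

lemma not_disjoint_Omega_of_omegaT_card_eq_one (f₁ : A → A) {f₂ : A → A → A}
    {x y : A × A × A} (hx : (omegaT f₂ x).card = 1) (hy : (omegaT f₂ y).card = 1) :
    ¬Disjoint (Omega f₁ f₂ x) (Omega f₁ f₂ y) := by
  have hxy : f₂ x.2.1 x.2.2 = f₂ y.2.1 y.2.2 := calc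
    f₂ x.2.1 x.2.2 = f₂ x.2.1 y.2.2 :=
      (apply_eq_of_omegaT_card_eq_one hx (dH3_thd_le_one y.2.2 x)).symm
    _ = f₂ y.2.1 y.2.2 := apply_eq_of_omegaT_card_eq_one hy (dH3_snd_le_one x.2.1 y)
  have hmem_x : (f₁ x.1, f₂ x.2.1 x.2.2) ∈ Omega f₁ f₂ x :=
    mem_Omega_of_dH3_le_one f₁ f₂ (by simp [dH3_self])
  have hmem_y : (f₁ x.1, f₂ x.2.1 x.2.2) ∈ Omega f₁ f₂ y :=
    hxy ▸ mem_Omega_of_dH3_le_one f₁ f₂ (dH3_fst_le_one x.1 y)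
  exact not_disjoint_iff.2 ⟨_, hmem_x, hmem_y⟩

end

theorem stmt3 {A : Type*} [Fintype A] [DecidableEq A]
    (f₁ : A → A) (f₂ : A → A → A) (C : Finset (A × A × A))
    (hC : Unambiguous f₁ f₂ C) :
    ∀ x ∈ C, ∀ y ∈ C, (omegaT f₂ x).card = 1 → (omegaT f₂ y).card = 1 → x = y := by
  intro x hx y hy hcx hcy
  by_contra hne
  exact not_disjoint_Omega_of_omegaT_card_eq_one f₁ hcx hcy (hC x hx y hy hne)
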